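/- Let (A, ∘, B) be a finite-dimensional quadratic Novikov algebra. Define θ: A → A* by θ(a) = B(a,·). Then θ is a linear isomorphism satisfying θ(a∘b) = L*_⋆(a)θ(b) and θ(b∘a) = -R*_∘(a)θ(b) for all a,b ∈ A, where ⟨L*_⋆(a)f, c⟩ = -⟨f, a⋆c⟩ and ⟨R*_∘(a)f, c⟩ = -⟨f, c∘a⟩. In other words, the adjoint representation (A, L_∘, R_∘) is isomorphic to the representation (A*, L*_⋆, -R*_∘). -/
import Mathlib


/-- For a finite-dimensional quadratic Novikov algebra, θ(a) = B(a,·) is a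
linear isomorphism intertwining the adjoint representation (L_∘, R_∘) with the
representation (L*_⋆, -R*_∘); i.e. θ is bijective, ⟨θ(a∘b), c⟩ = -⟨θ(b), a⋆c⟩
(so θ(a∘b) = L*_⋆(a)θ(b)) and ⟨θ(b∘a), c⟩ = ⟨θ(b), c∘a⟩ (so θ(b∘a) = -R*_∘(a)θ(b)). -/
theorem quadratic_novikov_adjoint_iso_dual
    {k A : Type*} [Field k] [CharZero k] [AddCommGroup A] [Module k A]
    [FiniteDimensional k A]
    (mul : A →ₗ[k] A →ₗ[k] A) (B : LinearMap.BilinForm k A)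
    (hnov1 : ∀ a b c, mul (mul a b) c - mul a (mul b c) = mul (mul b a) c - mul b (mul a c))
    (hnov2 : ∀ a b c, mul (mul a b) c = mul (mul a c) b)
    (hsym : ∀ a b, B a b = B b a)
    (hnd : ∀ a, (∀ b, B a b = 0) → a = 0)
    (hinv : ∀ a b c, B (mul a b) c = -(B b (mul a c + mul c a))) :
    Function.Bijective (fun a : A => (B a : Module.Dual k A)) ∧
    (∀ a b c, B (mul a b) c = -(B b (mul a c + mul c a))) ∧
    (∀ a b c, B (mul b a) c = B b (mul c a)) := by
  have hinj : Function.Injective (fun a : A => (B a : Module.Dual k A)) := by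
    intro a b h
    have h0 : ∀ c, B (a - b) c = 0 := by
      intro c
      have : B a c = B b c := congrArg (fun f : Module.Dual k A => f c) h
      simp only [map_sub, LinearMap.sub_apply]
      simpa using sub_eq_zero_of_eq this
    have := hnd _ h0
    exact sub_eq_zero.mp this
  refine ⟨⟨hinj, ?_⟩, hinv, ?_⟩
  · have : Function.Injective (B : A →ₗ[k] Module.Dual k A) := hinj
    have hfr : Module.finrank k A = Module.finrank k (Module.Dual k A) :=
      (Subspace.dual_finrank_eq).symm
    exact (LinearMap.injective_iff_surjective_of_finrank_eq_finrank hfr).mp this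
  · intro a b c
    rw [hinv b a c, hsym b (mul c a), hinv c a b]
    rw [add_comm]
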